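/- arXiv:1011.4930 — 4 statements merged into one kernel-verified Lean document; each statement's English description precedes it below -/
import Mathlib

section
/- For every matrix polynomial B in M_n(ℝ[X₁,…,X_d]) there exists a sum of squares polynomial c ∈ Σℝ[X]² such that c·I_n − BᵀB is a sum of squares of matrix polynomials, i.e. a finite sum of terms AᵀA with A ∈ M_n(ℝ[X]). -/
open MvPolynomial Matrix Finset

/-- `MSos P`: `P` is a finite sum of matrices of the form `Aᵀ * A`. -/
def MSos {d : ℕ} {ι : Type} [Fintype ι] [DecidableEq ι]
    (P : Matrix ι ι (MvPolynomial (Fin d) ℝ)) : Prop :=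
  P ∈ AddSubmonoid.closure {C : Matrix ι ι (MvPolynomial (Fin d) ℝ) | ∃ A, C = Aᵀ * A}

/-- `TS g f`: `f` lies in the preordering generated by `g 0, …, g (m-1)`. -/
def TS {d m : ℕ} (g : Fin m → MvPolynomial (Fin d) ℝ) (f : MvPolynomial (Fin d) ℝ) : Prop :=
  ∃ σ : (Fin m → Bool) → MvPolynomial (Fin d) ℝ,
    (∀ α, IsSumSq (σ α)) ∧ f = ∑ α : Fin m → Bool, σ α * ∏ i, if α i then g i else 1

/-- `TSn g P`: matrix preordering generated by `g` in `Matrix ι ι ℝ[X]`. -/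
def TSn {d m : ℕ} {ι : Type} [Fintype ι] [DecidableEq ι]
    (g : Fin m → MvPolynomial (Fin d) ℝ) (P : Matrix ι ι (MvPolynomial (Fin d) ℝ)) : Prop :=
  ∃ C : (Fin m → Bool) → Matrix ι ι (MvPolynomial (Fin d) ℝ),
    (∀ α, MSos (C α)) ∧ P = ∑ α : Fin m → Bool, (∏ i, if α i then g i else 1) • C α

/-- The basic closed semialgebraic set defined by `g`. -/
def KS {d m : ℕ} (g : Fin m → MvPolynomial (Fin d) ℝ) : Set (Fin d → ℝ) :=
  {x | ∀ i, 0 ≤ eval x (g i)}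

lemma aux_sq {R : Type*} [CommRing R] {n : ℕ} (v : Fin n → R) (i j : Fin n) :
    ∑ p, ∑ q, (v p * (if i = q then 1 else 0) - v q * (if i = p then 1 else 0)) *
              (v p * (if j = q then 1 else 0) - v q * (if j = p then 1 else 0))
    = (if i = j then 2 * ∑ t, v t * v t else 0) - 2 * (v i * v j) := by
  simp only [sub_mul, mul_sub, ite_mul, mul_ite, mul_one, mul_zero, zero_mul, one_mul,
    Finset.sum_sub_distrib, Finset.sum_ite_eq, Finset.sum_ite_eq', Finset.sum_ite_irrel,
    Finset.sum_const_zero, Finset.mem_univ, if_true]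
  split_ifs with h
  · subst h; ring
  · ring

theorem stmt_0 {d n : ℕ} (B : Matrix (Fin n) (Fin n) (MvPolynomial (Fin d) ℝ)) :
    ∃ c : MvPolynomial (Fin d) ℝ, IsSumSq c ∧
      MSos (c • (1 : Matrix (Fin n) (Fin n) (MvPolynomial (Fin d) ℝ)) - Bᵀ * B) := by
  classical
  set T : MvPolynomial (Fin d) ℝ := ∑ k, ∑ t, B k t * B k t with hT
  have hTsos : IsSumSq T := by
    have := IsSumSq.sum_mul_self (Finset.univ ×ˢ Finset.univ)
      (fun kt : Fin n × Fin n => B kt.1 kt.2)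
    rwa [Finset.sum_product] at this
  refine ⟨T + T, hTsos.add hTsos, ?_⟩
  set A : Fin n → Fin n → Fin n → Matrix (Fin n) (Fin n) (MvPolynomial (Fin d) ℝ) :=
    fun k p q => Matrix.of fun l j =>
      if l = p then B k p * (if j = q then 1 else 0) - B k q * (if j = p then 1 else 0) else 0
      with hA
  have inner : ∀ (k : Fin n) (i j : Fin n),
      ∑ p, ∑ q, ((A k p q)ᵀ * A k p q) i j
      = (if i = j then 2 * ∑ t, B k t * B k t else 0) - 2 * (B k i * B k j) := by
    intro k i j
    rw [← aux_sq (fun t => B k t) i j]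
    refine Finset.sum_congr rfl fun p _ => Finset.sum_congr rfl fun q _ => ?_
    simp [Matrix.mul_apply, hA, ite_mul, zero_mul, Finset.sum_ite_eq']
  have key : (T + T) • (1 : Matrix (Fin n) (Fin n) (MvPolynomial (Fin d) ℝ)) - Bᵀ * B
      = Bᵀ * B + ∑ k, ∑ p, ∑ q, (A k p q)ᵀ * A k p q := by
    apply Matrix.ext; intro i j
    simp only [Matrix.sub_apply, Matrix.add_apply, Matrix.smul_apply, Matrix.sum_apply]
    rw [Finset.sum_congr rfl fun k _ => inner k i j]
    simp only [Matrix.one_apply, Matrix.mul_apply, Matrix.transpose_apply, smul_eq_mul]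
    simp only [Finset.sum_sub_distrib, Finset.sum_ite_irrel, Finset.sum_const_zero,
      Finset.mul_sum, hT]
    split_ifs with h
    · subst h
      simp only [sq, two_mul, Finset.sum_add_distrib]
      ring
    · simp only [two_mul, Finset.sum_add_distrib]
      ring
  rw [key]
  refine AddSubmonoid.add_mem _ (AddSubmonoid.subset_closure ⟨B, rfl⟩) ?_
  exact AddSubmonoid.sum_mem _ fun k _ => AddSubmonoid.sum_mem _ fun p _ =>
    AddSubmonoid.sum_mem _ fun q _ => AddSubmonoid.subset_closure ⟨A k p q, rfl⟩
end

section
/- For every matrix polynomial B ∈ M_n(ℝ[X₁,…,X_d]) there exist positive integers k, l such that k·pˡ·I_n − BᵀB is a sum of squares of matrix polynomials, where p = 1 + X₁² + ⋯ + X_d². -/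
open MvPolynomial Matrix Finset

theorem IsSumSq.mymul {A : Type*} [CommSemiring A] {s t : A}
    (hs : IsSumSq s) (ht : IsSumSq t) : IsSumSq (s * t) := by
  have key : ∀ (a : A) {T : A}, IsSumSq T → IsSumSq (a * a * T) := by
    intro a T hT
    induction hT with
    | zero => simpa using IsSumSq.zero
    | @sq_add b T pT ih2 =>
      have h : a * a * (b * b + T) = (a * b) * (a * b) + a * a * T := by ring
      rw [h]; exact IsSumSq.sq_add _ ih2
  induction hs with
  | zero => simpa using IsSumSq.zero
  | @sq_add a S pS ih =>
    have h : (a * a + S) * t = a * a * t + S * t := by ring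
    rw [h]; exact (key a ht).add ih

theorem IsSumSq.mysq {A : Type*} [CommSemiring A] (a : A) : IsSumSq (a * a) := by
  simpa using IsSumSq.sq_add a 0 IsSumSq.zero


variable {d : ℕ}

noncomputable def pd (d : ℕ) : MvPolynomial (Fin d) ℝ := 1 + ∑ i : Fin d, X i ^ 2

theorem sosC {c : ℝ} (hc : 0 ≤ c) : IsSumSq (C c : MvPolynomial (Fin d) ℝ) := by
  rw [← Real.mul_self_sqrt hc, _root_.map_mul]; exact IsSumSq.mysq _

theorem sosCmul {c : ℝ} {f : MvPolynomial (Fin d) ℝ} (hc : 0 ≤ c) (hf : IsSumSq f) :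
    IsSumSq (C c * f) := (sosC hc).mymul hf

theorem sos_pd : IsSumSq (pd d) := by
  have h1 : (pd d) = 1 * 1 + ∑ i : Fin d, X i * X i := by
    simp [pd, pow_two]
  rw [h1]
  exact (IsSumSq.mysq 1).add (IsSumSq.sum_mul_self _ _)

theorem sos_pd_sub_one : IsSumSq (pd d - 1) := by
  have h1 : (pd d) - 1 = ∑ i : Fin d, X i * X i := by
    simp [pd, pow_two]
  rw [h1]; exact IsSumSq.sum_mul_self _ _

theorem sos_pd_pow (l : ℕ) : IsSumSq ((pd d) ^ l) := by
  induction l with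
  | zero => simpa using IsSumSq.sq_add (1:MvPolynomial (Fin d) ℝ) 0 IsSumSq.zero
  | succ n ih => rw [pow_succ]; exact ih.mymul sos_pd

theorem sos_pd_pow_sub_one (l : ℕ) : IsSumSq ((pd d) ^ l - 1) := by
  induction l with
  | zero => simpa using IsSumSq.zero
  | succ n ih =>
    have h : (pd d) ^ (n+1) - 1 = (pd d) * ((pd d)^n - 1) + (pd d - 1) := by ring
    rw [h]; exact (sos_pd.mymul ih).add sos_pd_sub_one

theorem sos_pd_pow_sub {m l : ℕ} (h : m ≤ l) : IsSumSq ((pd d) ^ l - (pd d) ^ m) := by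
  have h1 : (pd d) ^ l - (pd d) ^ m = (pd d) ^ m * ((pd d) ^ (l - m) - 1) := by
    rw [mul_sub, ← pow_add, mul_one, Nat.add_sub_cancel' h]
  rw [h1]; exact (sos_pd_pow m).mymul (sos_pd_pow_sub_one _)

/-- `f` is dominated by multiples of powers of `pd d`. -/
def Dom (f : MvPolynomial (Fin d) ℝ) : Prop :=
  ∃ (c : ℝ) (l : ℕ), 0 ≤ c ∧ IsSumSq (C c * (pd d) ^ l - f) ∧ IsSumSq (C c * (pd d) ^ l + f)

theorem dom_raise {c : ℝ} {f : MvPolynomial (Fin d) ℝ} {m l : ℕ} (hc : 0 ≤ c) (hml : m ≤ l)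
    (h : IsSumSq (C c * (pd d) ^ m + f)) : IsSumSq (C c * (pd d) ^ l + f) := by
  have he : C c * (pd d) ^ l + f
      = (C c * (pd d) ^ m + f) + C c * ((pd d) ^ l - (pd d) ^ m) := by ring
  rw [he]; exact h.add (sosCmul hc (sos_pd_pow_sub hml))

theorem dom_raise' {c : ℝ} {f : MvPolynomial (Fin d) ℝ} {m l : ℕ} (hc : 0 ≤ c) (hml : m ≤ l)
    (h : IsSumSq (C c * (pd d) ^ m - f)) : IsSumSq (C c * (pd d) ^ l - f) := by
  have he : C c * (pd d) ^ l - f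
      = (C c * (pd d) ^ m - f) + C c * ((pd d) ^ l - (pd d) ^ m) := by ring
  rw [he]; exact h.add (sosCmul hc (sos_pd_pow_sub hml))

theorem dom_neg {f : MvPolynomial (Fin d) ℝ} (h : Dom f) : Dom (-f) := by
  obtain ⟨c, l, hc, h1, h2⟩ := h
  exact ⟨c, l, hc, by simpa [sub_neg_eq_add] using h2, by simpa [← sub_eq_add_neg] using h1⟩

theorem dom_add {f g : MvPolynomial (Fin d) ℝ} (hf : Dom f) (hg : Dom g) : Dom (f + g) := by
  obtain ⟨c1, l1, hc1, hf1, hf2⟩ := hf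
  obtain ⟨c2, l2, hc2, hg1, hg2⟩ := hg
  refine ⟨c1 + c2, max l1 l2, by linarith, ?_, ?_⟩
  · have he : C (c1 + c2) * (pd d) ^ (max l1 l2) - (f + g)
        = (C c1 * (pd d) ^ (max l1 l2) - f) + (C c2 * (pd d) ^ (max l1 l2) - g) := by
      rw [map_add]; ring
    rw [he]
    exact (dom_raise' hc1 (le_max_left _ _) hf1).add (dom_raise' hc2 (le_max_right _ _) hg1)
  · have he : C (c1 + c2) * (pd d) ^ (max l1 l2) + (f + g)
        = (C c1 * (pd d) ^ (max l1 l2) + f) + (C c2 * (pd d) ^ (max l1 l2) + g) := by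
      rw [map_add]; ring
    rw [he]
    exact (dom_raise hc1 (le_max_left _ _) hf2).add (dom_raise hc2 (le_max_right _ _) hg2)

theorem dom_C (r : ℝ) : Dom (C r : MvPolynomial (Fin d) ℝ) := by
  refine ⟨|r|, 1, abs_nonneg r, ?_, ?_⟩
  · have he : C |r| * (pd d) ^ 1 - C r = C (|r| - r) + C |r| * (pd d - 1) := by
      rw [map_sub]; ring
    rw [he]
    exact (sosC (by linarith [le_abs_self r])).add (sosCmul (abs_nonneg r) sos_pd_sub_one)
  · have he : C |r| * (pd d) ^ 1 + C r = C (|r| + r) + C |r| * (pd d - 1) := by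
      rw [map_add]; ring
    rw [he]
    exact (sosC (by linarith [neg_abs_le r])).add (sosCmul (abs_nonneg r) sos_pd_sub_one)

theorem dom_of_mul_C {s : ℝ} {f : MvPolynomial (Fin d) ℝ} (hs : 0 < s)
    (h : Dom (C s * f)) : Dom f := by
  obtain ⟨c, l, hc, h1, h2⟩ := h
  have ha : (C (c / s) : MvPolynomial (Fin d) ℝ) = C (1/s) * C c := by
    rw [← _root_.map_mul]; congr 1; field_simp
  have hb : (C (1/s) : MvPolynomial (Fin d) ℝ) * C s = 1 := by
    rw [← _root_.map_mul, ← map_one (C : ℝ →+* MvPolynomial (Fin d) ℝ)]; congr 1; field_simp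
  have hs' : (0:ℝ) ≤ 1/s := by positivity
  refine ⟨c / s, l, by positivity, ?_, ?_⟩
  · have he : C (c/s) * (pd d) ^ l - f = C (1/s) * (C c * (pd d) ^ l - C s * f) := by
      linear_combination (pd d ^ l) * ha + f * hb
    rw [he]; exact sosCmul hs' h1
  · have he : C (c/s) * (pd d) ^ l + f = C (1/s) * (C c * (pd d) ^ l + C s * f) := by
      linear_combination (pd d ^ l) * ha - f * hb
    rw [he]; exact sosCmul hs' h2

theorem dom_X (i : Fin d) : Dom (X i : MvPolynomial (Fin d) ℝ) := by
  have hC2 : (C (2:ℝ) : MvPolynomial (Fin d) ℝ) = 2 := map_ofNat _ 2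
  have hS : (∑ j : Fin d, X j ^ 2 : MvPolynomial (Fin d) ℝ) = ∑ j : Fin d, X j * X j := by
    simp [pow_two]
  refine dom_of_mul_C (f := X i) two_pos ⟨2, 1, by norm_num, ?_, ?_⟩
  · set f : Fin d → MvPolynomial (Fin d) ℝ := fun j => if j = i then X i - 1 else X j with hf
    have hsum : ∑ j, f j * f j
        = (X i - 1) * (X i - 1) - X i * X i + ∑ j : Fin d, X j * X j := by
      have h0 : ∑ j, (f j * f j - X j * X j)
          = (X i - 1) * (X i - 1) - X i * X i := by
        rw [Finset.sum_eq_single i]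
        · simp [hf]
        · intro j _ hj; simp [hf, hj]
        · simp
      rw [Finset.sum_sub_distrib] at h0
      linear_combination h0
    have he : C (2:ℝ) * (pd d) ^ 1 - C (2:ℝ) * X i
        = 1 * 1 + ((∑ j, f j * f j) + ∑ j : Fin d, X j * X j) := by
      rw [hsum]; simp only [pd, pow_one]
      linear_combination (1 + (∑ j : Fin d, X j ^ 2) - X i) * hC2 + 2 * hS
    rw [he]
    exact IsSumSq.sq_add _ ((IsSumSq.sum_mul_self _ _).add (IsSumSq.sum_mul_self _ _))
  · set f : Fin d → MvPolynomial (Fin d) ℝ := fun j => if j = i then X i + 1 else X j with hf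
    have hsum : ∑ j, f j * f j
        = (X i + 1) * (X i + 1) - X i * X i + ∑ j : Fin d, X j * X j := by
      have h0 : ∑ j, (f j * f j - X j * X j)
          = (X i + 1) * (X i + 1) - X i * X i := by
        rw [Finset.sum_eq_single i]
        · simp [hf]
        · intro j _ hj; simp [hf, hj]
        · simp
      rw [Finset.sum_sub_distrib] at h0
      linear_combination h0
    have he : C (2:ℝ) * (pd d) ^ 1 + C (2:ℝ) * X i
        = 1 * 1 + ((∑ j, f j * f j) + ∑ j : Fin d, X j * X j) := by
      rw [hsum]; simp only [pd, pow_one]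
      linear_combination (1 + (∑ j : Fin d, X j ^ 2) + X i) * hC2 + 2 * hS
    rw [he]
    exact IsSumSq.sq_add _ ((IsSumSq.sum_mul_self _ _).add (IsSumSq.sum_mul_self _ _))

theorem dom_sq_minus {f : MvPolynomial (Fin d) ℝ} (hf : Dom f) :
    ∃ (c : ℝ) (l : ℕ), 0 ≤ c ∧ IsSumSq (C c * (pd d) ^ l - f * f) := by
  obtain ⟨c, l, hc, h1, h2⟩ := hf
  have hcc : (C (c * c) : MvPolynomial (Fin d) ℝ) = C c * C c := _root_.map_mul _ _ _
  refine ⟨c * c, 2 * l, mul_nonneg hc hc, ?_⟩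
  have he : C (c * c) * (pd d) ^ (2 * l) - f * f
      = (C c * (pd d) ^ l - f) * (C c * (pd d) ^ l + f) := by
    rw [hcc, two_mul, pow_add]; ring
  rw [he]; exact h1.mymul h2

theorem dom_mul {f g : MvPolynomial (Fin d) ℝ} (hf : Dom f) (hg : Dom g) : Dom (f * g) := by
  obtain ⟨c1, l1, hc1, h1⟩ := dom_sq_minus (dom_add hf hg)
  obtain ⟨c2, l2, hc2, h2⟩ := dom_sq_minus (dom_add hf (dom_neg hg))
  set l := max l1 l2
  have h1' : IsSumSq (C c1 * (pd d) ^ l - (f + g) * (f + g)) :=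
    dom_raise' hc1 (le_max_left _ _) h1
  have h2' : IsSumSq (C c2 * (pd d) ^ l - (f + -g) * (f + -g)) :=
    dom_raise' hc2 (le_max_right _ _) h2
  have hsq1 : IsSumSq (C c1 * (pd d) ^ l + (f + g) * (f + g)) :=
    (sosCmul hc1 (sos_pd_pow l)).add (IsSumSq.mysq _)
  have hsq2 : IsSumSq (C c2 * (pd d) ^ l + (f + -g) * (f + -g)) :=
    (sosCmul hc2 (sos_pd_pow l)).add (IsSumSq.mysq _)
  apply dom_of_mul_C (s := 4) (by norm_num)
  have h4 : (C (4:ℝ) : MvPolynomial (Fin d) ℝ) = 4 := map_ofNat _ 4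
  refine ⟨c1 + c2, l, by linarith, ?_, ?_⟩
  · have he : C (c1 + c2) * (pd d) ^ l - C (4:ℝ) * (f * g)
        = (C c1 * (pd d) ^ l - (f + g) * (f + g))
          + (C c2 * (pd d) ^ l + (f + -g) * (f + -g)) := by
      rw [map_add, h4]; ring
    rw [he]; exact h1'.add hsq2
  · have he : C (c1 + c2) * (pd d) ^ l + C (4:ℝ) * (f * g)
        = (C c2 * (pd d) ^ l - (f + -g) * (f + -g))
          + (C c1 * (pd d) ^ l + (f + g) * (f + g)) := by
      rw [map_add, h4]; ring
    rw [he]; exact h2'.add hsq1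

theorem dom_all (f : MvPolynomial (Fin d) ℝ) : Dom f := by
  induction f using MvPolynomial.induction_on with
  | C r => exact dom_C r
  | add f g hf hg => exact dom_add hf hg
  | mul_X f i hf => exact dom_mul hf (dom_X i)

variable {d : ℕ} {ι : Type} [Fintype ι] [DecidableEq ι]

theorem msos_zero : MSos (0 : Matrix ι ι (MvPolynomial (Fin d) ℝ)) := zero_mem _

theorem msos_add {P Q : Matrix ι ι (MvPolynomial (Fin d) ℝ)} (hP : MSos P) (hQ : MSos Q) :
    MSos (P + Q) := add_mem hP hQ

theorem msos_tt (A : Matrix ι ι (MvPolynomial (Fin d) ℝ)) : MSos (Aᵀ * A) :=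
  AddSubmonoid.subset_closure ⟨A, rfl⟩

theorem msos_sum {α : Type*} (s : Finset α) (F : α → Matrix ι ι (MvPolynomial (Fin d) ℝ))
    (h : ∀ a ∈ s, MSos (F a)) : MSos (∑ a ∈ s, F a) := sum_mem h

theorem msos_smul_one {s : MvPolynomial (Fin d) ℝ} (hs : IsSumSq s) :
    MSos (s • (1 : Matrix ι ι (MvPolynomial (Fin d) ℝ))) := by
  induction hs with
  | zero => simpa using msos_zero
  | @sq_add a S pS ih =>
    rw [add_smul]
    refine msos_add ?_ ih
    have he : (a * a) • (1 : Matrix ι ι (MvPolynomial (Fin d) ℝ))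
        = (a • (1 : Matrix ι ι (MvPolynomial (Fin d) ℝ)))ᵀ
          * (a • (1 : Matrix ι ι (MvPolynomial (Fin d) ℝ))) := by
      rw [transpose_smul, transpose_one, smul_mul_smul_comm, one_mul]
    rw [he]; exact msos_tt _

theorem msos_smul_C {c : ℝ} {P : Matrix ι ι (MvPolynomial (Fin d) ℝ)} (hc : 0 ≤ c)
    (hP : MSos P) : MSos ((C c : MvPolynomial (Fin d) ℝ) • P) := by
  induction hP using AddSubmonoid.closure_induction with
  | mem x hx =>
    obtain ⟨A, rfl⟩ := hx
    have he : (C c : MvPolynomial (Fin d) ℝ) • (Aᵀ * A)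
        = ((C (Real.sqrt c) : MvPolynomial (Fin d) ℝ) • A)ᵀ
          * ((C (Real.sqrt c) : MvPolynomial (Fin d) ℝ) • A) := by
      rw [transpose_smul, smul_mul_smul_comm, ← _root_.map_mul, Real.mul_self_sqrt hc]
    rw [he]; exact msos_tt _
  | zero => simpa using msos_zero
  | add x y _ _ hx hy => rw [smul_add]; exact msos_add hx hy

noncomputable def W (B : Matrix ι ι (MvPolynomial (Fin d) ℝ)) (r i j : ι) :
    Matrix ι ι (MvPolynomial (Fin d) ℝ) :=
  fun a b => if a = i then
    (B r i * (if b = j then 1 else 0) - B r j * (if b = i then 1 else 0)) else 0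

theorem key_identity (B : Matrix ι ι (MvPolynomial (Fin d) ℝ)) :
    ((2 : MvPolynomial (Fin d) ℝ) * ∑ r, ∑ i, B r i * B r i) •
        (1 : Matrix ι ι (MvPolynomial (Fin d) ℝ))
      - (2 : MvPolynomial (Fin d) ℝ) • (Bᵀ * B)
    = ∑ r, ∑ i, ∑ j, (W B r i j)ᵀ * (W B r i j) := by
  have split : ∀ (c : Prop) [Decidable c] (x y : MvPolynomial (Fin d) ℝ),
      (if c then x - y else 0) = (if c then x else 0) - (if c then y else 0) := by
    intros c _ x y; split <;> simp
  refine Matrix.ext (fun a b => ?_)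
  simp only [Matrix.sub_apply, Matrix.smul_apply, Matrix.one_apply, Matrix.sum_apply,
    Matrix.mul_apply, Matrix.transpose_apply, smul_eq_mul, W]
  simp only [ite_mul, mul_ite, zero_mul, mul_zero, split, sub_mul, mul_sub, mul_one,
    Finset.sum_sub_distrib, Finset.sum_ite_eq, Finset.sum_ite_eq', Finset.mem_univ, if_true]
  have h1 : ∀ F : ι → ι → MvPolynomial (Fin d) ℝ,
      (∑ x_1 : ι, ∑ x_2 : ι, if b = x_1 then F x_1 x_2 else 0) = ∑ x_2 : ι, F b x_2 := by
    intro F; rw [Finset.sum_comm]; simp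
  have hcomm : (∑ x : ι, B x b * B x a) = ∑ x : ι, B x a * B x b :=
    Finset.sum_congr rfl (fun x _ => mul_comm _ _)
  by_cases hab : a = b
  · simp only [hab, h1, Finset.sum_ite_eq, Finset.mem_univ, if_true, ← Finset.mul_sum]
    ring
  · simp only [h1, Finset.sum_ite_eq, Finset.mem_univ, if_true, if_neg hab,
      Finset.sum_const_zero, hcomm, ← Finset.mul_sum]
    ring

theorem key_trace_msos {d : ℕ} {ι : Type} [Fintype ι] [DecidableEq ι]
    (B : Matrix ι ι (MvPolynomial (Fin d) ℝ)) :
    MSos ((∑ r, ∑ i, B r i * B r i) • (1 : Matrix ι ι (MvPolynomial (Fin d) ℝ)) - Bᵀ * B) := by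
  have hhalf : (C (1/2 : ℝ) : MvPolynomial (Fin d) ℝ) * 2 = 1 := by
    rw [show (2 : MvPolynomial (Fin d) ℝ) = C (2:ℝ) from (map_ofNat _ 2).symm, ← _root_.map_mul,
      ← map_one (C : ℝ →+* MvPolynomial (Fin d) ℝ)]
    norm_num
  have hbig : MSos (((2 : MvPolynomial (Fin d) ℝ) * ∑ r, ∑ i, B r i * B r i) •
      (1 : Matrix ι ι (MvPolynomial (Fin d) ℝ))
      - (2 : MvPolynomial (Fin d) ℝ) • (Bᵀ * B)) := by
    rw [key_identity B]
    exact msos_sum _ _ (fun r _ => msos_sum _ _ (fun i _ => msos_sum _ _ (fun j _ => msos_tt _)))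
  have he : (∑ r, ∑ i, B r i * B r i) • (1 : Matrix ι ι (MvPolynomial (Fin d) ℝ)) - Bᵀ * B
      = (C (1/2 : ℝ) : MvPolynomial (Fin d) ℝ) •
        (((2 : MvPolynomial (Fin d) ℝ) * ∑ r, ∑ i, B r i * B r i) •
          (1 : Matrix ι ι (MvPolynomial (Fin d) ℝ))
          - (2 : MvPolynomial (Fin d) ℝ) • (Bᵀ * B)) := by
    rw [smul_sub, smul_smul, smul_smul, ← mul_assoc, hhalf, one_mul, one_smul]
  rw [he]
  exact msos_smul_C (by norm_num) hbig

theorem stmt_1 {d n : ℕ} (B : Matrix (Fin n) (Fin n) (MvPolynomial (Fin d) ℝ))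
    (p : MvPolynomial (Fin d) ℝ) (hp : p = 1 + ∑ i : Fin d, X i ^ 2) :
    ∃ k l : ℕ, 0 < k ∧ 0 < l ∧
      MSos (((k : MvPolynomial (Fin d) ℝ) * p ^ l) •
        (1 : Matrix (Fin n) (Fin n) (MvPolynomial (Fin d) ℝ)) - Bᵀ * B) := by
  have hppd : p = pd d := hp
  subst hppd
  set t : MvPolynomial (Fin d) ℝ := ∑ r, ∑ i, B r i * B r i with ht
  obtain ⟨c, l, hc, h1, -⟩ := dom_all t
  refine ⟨⌈c⌉₊ + 1, l + 1, Nat.succ_pos _, Nat.succ_pos _, ?_⟩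
  set k : ℕ := ⌈c⌉₊ + 1 with hk
  have hck : c ≤ (k : ℝ) := by
    calc c ≤ (⌈c⌉₊ : ℝ) := Nat.le_ceil c
    _ ≤ (k : ℝ) := by rw [hk]; push_cast; linarith
  have hs1 : IsSumSq (C ((k:ℝ) - c) * (pd d) ^ (l+1)) :=
    sosCmul (by linarith) (sos_pd_pow _)
  have hs2 : IsSumSq (C c * (pd d) ^ (l+1) - t) := dom_raise' hc (Nat.le_succ l) h1
  have hM3 : MSos (t • (1 : Matrix (Fin n) (Fin n) (MvPolynomial (Fin d) ℝ)) - Bᵀ * B) :=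
    key_trace_msos B
  have hsc : C ((k:ℝ) - c) * (pd d) ^ (l+1) + (C c * (pd d) ^ (l+1) - t) + t
      = (k : MvPolynomial (Fin d) ℝ) * (pd d) ^ (l+1) := by
    rw [map_sub, ← map_natCast (C : ℝ →+* MvPolynomial (Fin d) ℝ) k]
    ring
  have hmat : ((k : MvPolynomial (Fin d) ℝ) * (pd d) ^ (l+1)) •
        (1 : Matrix (Fin n) (Fin n) (MvPolynomial (Fin d) ℝ)) - Bᵀ * B
      = (C ((k:ℝ) - c) * (pd d) ^ (l+1)) • (1 : Matrix (Fin n) (Fin n) (MvPolynomial (Fin d) ℝ))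
        + (C c * (pd d) ^ (l+1) - t) • (1 : Matrix (Fin n) (Fin n) (MvPolynomial (Fin d) ℝ))
        + (t • (1 : Matrix (Fin n) (Fin n) (MvPolynomial (Fin d) ℝ)) - Bᵀ * B) := by
    rw [← hsc, add_smul, add_smul]
    abel
  rw [hmat]
  exact msos_add (msos_add (msos_smul_one hs1) (msos_smul_one hs2)) hM3
end

section
/- If B₁, B₂ ∈ M_n(ℝ[X]) and c₁, c₂ are sums of squares of polynomials such that c₁·I_n − B₁ᵀB₁ and c₂·I_n − B₂ᵀB₂ are sums of squares of matrix polynomials, then c₁c₂·I_n − (B₁B₂)ᵀ(B₁B₂) is a sum of squares of matrix polynomials. -/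
open MvPolynomial Matrix Finset

lemma MSos_conj {d n : ℕ} {S B : Matrix (Fin n) (Fin n) (MvPolynomial (Fin d) ℝ)}
    (hS : MSos S) : MSos (Bᵀ * S * B) := by
  induction hS using AddSubmonoid.closure_induction with
  | mem x hx =>
    obtain ⟨A, rfl⟩ := hx
    exact AddSubmonoid.subset_closure ⟨A * B, by simp [Matrix.transpose_mul, Matrix.mul_assoc]⟩
  | zero => rw [Matrix.mul_zero, Matrix.zero_mul]; exact (AddSubmonoid.closure _).zero_mem
  | add x y _ _ hx hy =>
    have : Bᵀ * (x + y) * B = Bᵀ * x * B + Bᵀ * y * B := by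
      simp [Matrix.mul_add, Matrix.add_mul]
    rw [this]; exact (AddSubmonoid.closure _).add_mem hx hy

lemma MSos_smul_sq {d n : ℕ} {S : Matrix (Fin n) (Fin n) (MvPolynomial (Fin d) ℝ)}
    (p : MvPolynomial (Fin d) ℝ) (hS : MSos S) : MSos ((p * p) • S) := by
  induction hS using AddSubmonoid.closure_induction with
  | mem x hx =>
    obtain ⟨A, rfl⟩ := hx
    refine AddSubmonoid.subset_closure ⟨p • A, ?_⟩
    refine Matrix.ext fun i j => ?_
    simp only [Matrix.mul_apply, Matrix.smul_apply, Matrix.transpose_apply, smul_eq_mul,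
      Finset.mul_sum]
    exact Finset.sum_congr rfl fun k _ => by ring
  | zero => rw [smul_zero]; exact (AddSubmonoid.closure _).zero_mem
  | add x y _ _ hx hy =>
    rw [smul_add]; exact (AddSubmonoid.closure _).add_mem hx hy

lemma MSos_smul_sos {d n : ℕ} {S : Matrix (Fin n) (Fin n) (MvPolynomial (Fin d) ℝ)}
    {c : MvPolynomial (Fin d) ℝ} (hc : IsSumSq c) (hS : MSos S) : MSos (c • S) := by
  induction hc with
  | zero => rw [zero_smul]; exact (AddSubmonoid.closure _).zero_mem
  | sq_add p hq ih =>
    rw [add_smul]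
    exact (AddSubmonoid.closure _).add_mem (MSos_smul_sq p hS) ih

theorem stmt_3 {d n : ℕ} (B₁ B₂ : Matrix (Fin n) (Fin n) (MvPolynomial (Fin d) ℝ))
    (c₁ c₂ : MvPolynomial (Fin d) ℝ) (hc₁ : IsSumSq c₁) (hc₂ : IsSumSq c₂)
    (h₁ : MSos (c₁ • (1 : Matrix (Fin n) (Fin n) (MvPolynomial (Fin d) ℝ)) - B₁ᵀ * B₁))
    (h₂ : MSos (c₂ • (1 : Matrix (Fin n) (Fin n) (MvPolynomial (Fin d) ℝ)) - B₂ᵀ * B₂)) :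
    MSos ((c₁ * c₂) • (1 : Matrix (Fin n) (Fin n) (MvPolynomial (Fin d) ℝ)) -
      (B₁ * B₂)ᵀ * (B₁ * B₂)) := by
  have key : (c₁ * c₂) • (1 : Matrix (Fin n) (Fin n) (MvPolynomial (Fin d) ℝ)) -
      (B₁ * B₂)ᵀ * (B₁ * B₂) =
      B₂ᵀ * (c₁ • 1 - B₁ᵀ * B₁) * B₂ + c₁ • (c₂ • 1 - B₂ᵀ * B₂) := by
    simp [Matrix.mul_sub, Matrix.sub_mul, smul_sub, Matrix.transpose_mul, Matrix.mul_smul,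
      Matrix.smul_mul, mul_smul, Matrix.mul_assoc, smul_comm c₁ c₂]
  rw [key]
  exact (AddSubmonoid.closure _).add_mem (MSos_conj h₁) (MSos_smul_sos hc₁ h₂)
end

section
/- Let F = [[f₁₁, g],[gᵀ, H]] be a symmetric n×n matrix over a commutative ring, with f₁₁ a scalar, g a row vector, H symmetric of size n−1. Then f₁₁³·F = LᵀDL where L = [[f₁₁, g],[0, f₁₁·I_{n−1}]] and D = diag(f₁₁², f₁₁·H − gᵀg). (Note f₁₁·H − gᵀg = f₁₁·H̃ where H̃ is the Schur complement.) -/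
open Matrix

theorem stmt_5 {R : Type} [CommRing R] {n : ℕ}
    (f₁₁ : R) (g : Matrix (Fin 1) (Fin n) R)
    (H : Matrix (Fin n) (Fin n) R) (hH : Hᵀ = H) :
    f₁₁ ^ 3 • fromBlocks (f₁₁ • (1 : Matrix (Fin 1) (Fin 1) R)) g gᵀ H =
      (fromBlocks (f₁₁ • (1 : Matrix (Fin 1) (Fin 1) R)) g 0
          (f₁₁ • (1 : Matrix (Fin n) (Fin n) R)))ᵀ *
        fromBlocks ((f₁₁ ^ 2) • (1 : Matrix (Fin 1) (Fin 1) R)) 0 0 (f₁₁ • H - gᵀ * g) *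
        fromBlocks (f₁₁ • (1 : Matrix (Fin 1) (Fin 1) R)) g 0
          (f₁₁ • (1 : Matrix (Fin n) (Fin n) R)) := by
  ext (i | i) (j | j) <;>
    simp [Matrix.mul_apply, Fin.sum_univ_succ, Matrix.one_apply, fromBlocks,
      Finset.sum_sub_distrib, Finset.mul_sum, Finset.sum_mul]
  all_goals try simp [Fin.fin_one_eq_zero]
  all_goals ring
end
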